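/- arXiv:1007.1356 — 2 statements merged into one kernel-verified Lean document; each statement's English description precedes it below -/
import Mathlib

section
/- Let f be a unit of R. Assume that every a ∈ A with a ≠ 0 dominates every element of the form b·f^{-i} with b ∈ A and i ≥ 1; that is, {n : a(n) = 0} is finite and |b(n)·f(n)^{-i}|_n / |a(n)|_n → 0 as n → ∞. Then f is transcendental over A: for all a_0, a_1, …, a_m ∈ A, if ∑_{i=0}^m a_i·f^i = 0 in R, then a_0 = a_1 = … = a_m = 0. -/
open Filter

/-!
If `a_m ≠ 0` is the top coefficient of a relation `∑_{i ≤ m} a_i f^i = 0`, dividing by `f^m`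
expresses `a_m` as `∑_{i < m} (-a_i) f^{-(m-i)}`, a sum of elements that `a_m` dominates.
Domination is preserved by finite sums, so `a_m` would dominate itself, which is absurd since
`|a_m(n)|_n / |a_m(n)|_n = 1` for all but finitely many `n`. Peeling off top coefficients
one at a time gives the theorem.
-/

section Dominates

variable {R : ℕ → Type*} [∀ n, Semiring (R n)] (v : ∀ n, AbsoluteValue (R n) ℝ)

def Dominates (a b : ∀ n, R n) : Prop :=
  {n : ℕ | a n = 0}.Finite ∧ Tendsto (fun n => v n (b n) / v n (a n)) atTop (nhds 0)

variable {v}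

theorem dominates_zero_iff {a : ∀ n, R n} : Dominates v a 0 ↔ {n : ℕ | a n = 0}.Finite := by
  simp [Dominates]

theorem Dominates.add {a b c : ∀ n, R n} (hb : Dominates v a b) (hc : Dominates v a c) :
    Dominates v a (b + c) := by
  refine ⟨hb.1, ?_⟩
  refine squeeze_zero (fun n => by positivity) (fun n => ?_) (by simpa using hb.2.add hc.2)
  rw [← add_div]
  exact div_le_div_of_nonneg_right ((v n).add_le _ _) (by positivity)

theorem Dominates.finset_sum {ι : Type*} {s : Finset ι} {a : ∀ n, R n} {b : ι → ∀ n, R n}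
    (ha : {n : ℕ | a n = 0}.Finite) (hb : ∀ i ∈ s, Dominates v a (b i)) :
    Dominates v a (∑ i ∈ s, b i) :=
  Finset.sum_induction b (Dominates v a) (fun _ _ => Dominates.add)
    (dominates_zero_iff.2 ha) hb

theorem not_dominates_self (a : ∀ n, R n) : ¬Dominates v a a := by
  rintro ⟨hfin, hlim⟩
  have hone : ∀ᶠ n in atTop, v n (a n) / v n (a n) = 1 := by
    rw [← Nat.cofinite_eq_atTop]
    filter_upwards [hfin.eventually_cofinite_notMem] with n hn
    exact div_self ((v n).ne_zero_iff.2 hn)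
  exact one_ne_zero (tendsto_const_nhds_iff.1 (hlim.congr' hone))

end Dominates

theorem Units.pow_mul_inv_pow_of_le {M : Type*} [CommMonoid M] (u : Mˣ) {i m : ℕ} (h : i ≤ m) :
    (u : M) ^ i * (↑u⁻¹ : M) ^ m = (↑u⁻¹ : M) ^ (m - i) := by
  conv_lhs => rw [← Nat.add_sub_cancel' h, pow_add, ← mul_assoc, ← mul_pow, u.mul_inv,
    one_pow, one_mul]

theorem eq_sum_neg_mul_inv_pow_of_sum_mul_pow_eq_zero {R : Type*} [CommRing R] (f : Rˣ)
    {m : ℕ} {a : ℕ → R} (hsum : ∑ i ∈ Finset.range (m + 1), a i * (f : R) ^ i = 0) :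
    a m = ∑ i ∈ Finset.range m, -a i * (↑f⁻¹ : R) ^ (m - i) := by
  have hdiv : ∑ i ∈ Finset.range (m + 1), a i * (↑f⁻¹ : R) ^ (m - i) = 0 := by
    rw [← zero_mul ((↑f⁻¹ : R) ^ m), ← hsum, Finset.sum_mul]
    refine Finset.sum_congr rfl fun i hi => ?_
    rw [mul_assoc, f.pow_mul_inv_pow_of_le (Finset.mem_range_succ_iff.1 hi)]
  rw [Finset.sum_range_succ, Nat.sub_self, pow_zero, mul_one] at hdiv
  simp only [neg_mul, Finset.sum_neg_distrib]
  exact (neg_eq_of_add_eq_zero_right hdiv).symm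

theorem top_coeff_eq_zero_of_dominates
    {R : ℕ → Type*} [∀ n, CommRing (R n)] {v : ∀ n, AbsoluteValue (R n) ℝ}
    {A : Subring (∀ n, R n)} {f : (∀ n, R n)ˣ}
    (hdom : ∀ a ∈ A, a ≠ 0 → ∀ b ∈ A, ∀ i : ℕ, 1 ≤ i → Dominates v a (b * ↑f⁻¹ ^ i))
    {m : ℕ} {a : ℕ → ∀ n, R n} (ha : ∀ i, a i ∈ A)
    (hsum : ∑ i ∈ Finset.range (m + 1), a i * (f : ∀ n, R n) ^ i = 0) :
    a m = 0 := by
  by_contra hne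
  have hfin : {n : ℕ | a m n = 0}.Finite := (hdom _ (ha m) hne 0 A.zero_mem 1 le_rfl).1
  have hterms : ∀ i ∈ Finset.range m, Dominates v (a m) (-a i * ↑f⁻¹ ^ (m - i)) :=
    fun i hi => hdom _ (ha m) hne _ (A.neg_mem (ha i)) _
      (Nat.sub_pos_of_lt (Finset.mem_range.1 hi))
  have hself := Dominates.finset_sum hfin hterms
  rw [← eq_sum_neg_mul_inv_pow_of_sum_mul_pow_eq_zero f hsum] at hself
  exact not_dominates_self _ hself

theorem transcendental_of_dominates_general
    {R : ℕ → Type*} [∀ n, CommRing (R n)]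
    (v : ∀ n, AbsoluteValue (R n) ℝ) (A : Subring (∀ n, R n))
    (f : (∀ n, R n)ˣ)
    (hdom : ∀ a ∈ A, a ≠ (0 : ∀ n, R n) → ∀ b ∈ A, ∀ i : ℕ, 1 ≤ i →
      {n : ℕ | a n = 0}.Finite ∧
      Tendsto
        (fun n => v n (b n * (((f⁻¹ : (∀ n, R n)ˣ) : ∀ n, R n) ^ i) n) / v n (a n))
        atTop (nhds 0)) :
    ∀ (m : ℕ) (a : ℕ → ∀ n, R n), (∀ i, a i ∈ A) →
      (∑ i ∈ Finset.range (m + 1), a i * ((f : ∀ n, R n)) ^ i) = 0 →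
      ∀ i ≤ m, a i = 0 := by
  intro m a ha
  induction m with
  | zero =>
    intro hsum i hi
    rw [Nat.le_zero.1 hi]
    exact top_coeff_eq_zero_of_dominates hdom ha hsum
  | succ m ih =>
    intro hsum i hi
    have htop : a (m + 1) = 0 := top_coeff_eq_zero_of_dominates hdom ha hsum
    rw [Finset.sum_range_succ, htop, zero_mul, add_zero] at hsum
    rcases hi.lt_or_eq with hi | rfl
    · exact ih hsum i (Nat.lt_succ_iff.1 hi)
    · exact htop

/-- Let `f` be a unit of `R = ∏ n, R n`.  If every nonzero `a ∈ A` dominates every element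
`b * f⁻ⁱ` with `b ∈ A` and `i ≥ 1` (i.e. `a` vanishes at finitely many coordinates and
`|b n * (f⁻¹ n)^i|_n / |a n|_n → 0`), then `f` is transcendental over `A`: any vanishing
polynomial relation `∑ i, a i * f ^ i = 0` with coefficients in `A` has all coefficients
zero. -/
theorem transcendental_of_dominates
    {R : ℕ → Type*} [∀ n, CommRing (R n)] [∀ n, IsDomain (R n)]
    (v : ∀ n, AbsoluteValue (R n) ℝ) (A : Subring (∀ n, R n))
    (f : (∀ n, R n)ˣ)
    (hdom : ∀ a ∈ A, a ≠ (0 : ∀ n, R n) → ∀ b ∈ A, ∀ i : ℕ, 1 ≤ i →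
      {n : ℕ | a n = 0}.Finite ∧
      Tendsto
        (fun n => v n (b n * (((f⁻¹ : (∀ n, R n)ˣ) : ∀ n, R n) ^ i) n) / v n (a n))
        atTop (nhds 0)) :
    ∀ (m : ℕ) (a : ℕ → ∀ n, R n), (∀ i, a i ∈ A) →
      (∑ i ∈ Finset.range (m + 1), a i * ((f : ∀ n, R n)) ^ i) = 0 →
      ∀ i ≤ m, a i = 0 :=
  transcendental_of_dominates_general v A f hdom
end

section
/- Let λ, μ ∈ ℂ be nonzero. Then G(λ) and G(μ) have the same universal theory if and only if either λ and μ are both transcendental over ℚ, or λ and μ are both algebraic over ℚ and the minimal polynomial of λ over ℚ equals the minimal polynomial of μ over ℚ or the minimal polynomial of μ^{-1} over ℚ. -/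
/-- The semidirect product `R ⋊_u ℤ`: underlying set `R × ℤ` with multiplication
`(r, k) · (r', k') = (r + u^k · r', k + k')`, where `u` is a unit of the commutative ring
`R`. -/
def SDP (R : Type*) [CommRing R] (u : Rˣ) : Type _ := R × ℤ

namespace SDP

variable {R : Type*} [CommRing R] {u : Rˣ}

instance : Mul (SDP R u) := ⟨fun g h => (g.1 + ((u ^ g.2 : Rˣ) : R) * h.1, g.2 + h.2)⟩
instance : One (SDP R u) := ⟨((0 : R), (0 : ℤ))⟩
instance : Inv (SDP R u) := ⟨fun g => (-(((u ^ (-g.2) : Rˣ) : R) * g.1), -g.2)⟩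

theorem mul_def (g h : SDP R u) :
    g * h = (g.1 + ((u ^ g.2 : Rˣ) : R) * h.1, g.2 + h.2) := rfl
theorem one_def : (1 : SDP R u) = ((0 : R), (0 : ℤ)) := rfl
theorem inv_def (g : SDP R u) : g⁻¹ = (-(((u ^ (-g.2) : Rˣ) : R) * g.1), -g.2) := rfl

instance instGroup : Group (SDP R u) where
  mul_assoc a b c := by
    rw [mul_def, mul_def, mul_def, mul_def]
    refine Prod.ext ?_ ?_
    · show (a.1 + ↑(u ^ a.2) * b.1) + ↑(u ^ (a.2 + b.2)) * c.1
        = a.1 + ↑(u ^ a.2) * (b.1 + ↑(u ^ b.2) * c.1)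
      rw [zpow_add]; push_cast; ring
    · show (a.2 + b.2) + c.2 = a.2 + (b.2 + c.2); omega
  one_mul a := by
    rw [mul_def]
    refine Prod.ext ?_ ?_
    · show (0 : R) + ↑(u ^ (0 : ℤ)) * a.1 = a.1; simp
    · show (0 : ℤ) + a.2 = a.2; omega
  mul_one a := by
    rw [mul_def]
    refine Prod.ext ?_ ?_
    · show a.1 + ↑(u ^ a.2) * (0 : R) = a.1; simp
    · show a.2 + (0 : ℤ) = a.2; omega
  inv_mul_cancel a := by
    rw [mul_def]
    refine Prod.ext ?_ ?_
    · show -(↑(u ^ (-a.2)) * a.1) + ↑(u ^ (-a.2)) * a.1 = (0 : R); simp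
    · show -a.2 + a.2 = (0 : ℤ); omega

end SDP
/-- `R_λ = ℤ[λ, λ⁻¹]`, the smallest subring of `ℂ` containing `λ` and `λ⁻¹`. -/
def Rring (l : ℂ) : Subring ℂ := Subring.closure {l, l⁻¹}

/-- `λ` as a unit of `R_λ` (for `λ ≠ 0`). -/
noncomputable def Runit (l : ℂ) (hl : l ≠ 0) : (Rring l)ˣ where
  val := ⟨l, Subring.subset_closure (by simp)⟩
  inv := ⟨l⁻¹, Subring.subset_closure (by simp)⟩
  val_inv := Subtype.ext (mul_inv_cancel₀ hl)
  inv_val := Subtype.ext (inv_mul_cancel₀ hl)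

/-- `G(λ) = R_λ ⋊ ℤ`, where the generator `1 ∈ ℤ` acts by multiplication by `λ`:
the set `R_λ × ℤ` with multiplication `(r, k) · (r', k') = (r + λ^k r', k + k')`. -/
noncomputable def Gl (l : ℂ) (hl : l ≠ 0) : Type := SDP (Rring l) (Runit l hl)

noncomputable instance (l : ℂ) (hl : l ≠ 0) : Group (Gl l hl) :=
  inferInstanceAs (Group (SDP (Rring l) (Runit l hl)))
/-- Two groups have the same universal theory iff for every `n ≥ 1` and all finite subsets
`E, I` of the free group of rank `n`, there is a homomorphism to the first group killing all
of `E` and killing none of `I` exactly when there is such a homomorphism to the second. -/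
def SameUniversalTheory (G H : Type*) [Group G] [Group H] : Prop :=
  ∀ n : ℕ, 1 ≤ n → ∀ E I : Finset (FreeGroup (Fin n)),
    ((∃ f : FreeGroup (Fin n) →* G, (∀ w ∈ E, f w = 1) ∧ ∀ w ∈ I, f w ≠ 1) ↔
      (∃ f : FreeGroup (Fin n) →* H, (∀ w ∈ E, f w = 1) ∧ ∀ w ∈ I, f w ≠ 1))

/-!
In `R ⋊_u ℤ` commutators lie in the kernel `R`, an element `x` with `ℤ`-coordinate `k` acts on `R`
by multiplication by `u ^ k`, and for `q ∈ ℤ[X]` the word `w_q(x, y) = ∏ᵢ (xⁱ y x⁻ⁱ) ^ qᵢ` sends a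
kernel element `y` to `q(u ^ k) y`. So the existential sentence
`∃ x y, w_q(x, ⁅x, y⁆) = 1 ∧ ⁅x, ⁅x, y⁆⁆ ≠ 1` holds in `G(λ)` iff `q` vanishes at some `λ ^ k ≠ 1`
(for `q = 0`: iff `λ ≠ 1`). Taking for `q` multiples of the minimal polynomials of `λ` and `μ`
shows that either both are transcendental, or `λ` is conjugate to some `μ ^ k` and `μ` to some
`λ ^ k'`. Conjugate numbers have the same multiplicative order, which settles roots of unity via
cyclotomic polynomials; otherwise `λ` is conjugate to `λ ^ (k' k)`, and as `λ` has finitely many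
conjugates, `k' k = ±1`.

Conversely, if `λ` and `μ` are conjugate (or both transcendental), evaluating integer Laurent
polynomials at `λ` and at `μ` gives maps with the same kernel, so `λ ↦ μ` induces `R_λ ≅ R_μ` and
`G(λ) ≅ G(μ)`; and `G(μ) ≅ G(μ⁻¹)` by negating the `ℤ`-coordinate.
-/

open Polynomial
open scoped commutatorElement

theorem orderOf_zpow_dvd {G : Type*} [DivisionMonoid G] (x : G) (k : ℤ) :
    orderOf (x ^ k) ∣ orderOf x := by
  apply orderOf_dvd_of_pow_eq_one
  rw [← zpow_natCast, ← zpow_mul, mul_comm, zpow_mul, zpow_natCast, pow_orderOf_eq_one, one_zpow]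

theorem orderOf_ne_zero_of_zpow_eq_one {G : Type*} [DivisionMonoid G] {x : G} {k : ℤ}
    (hk : k ≠ 0) (h : x ^ k = 1) : orderOf x ≠ 0 := by
  obtain ⟨n, hn, hxn⟩ : ∃ n : ℕ, 0 < n ∧ x ^ n = 1 := by
    obtain ⟨n, rfl | rfl⟩ := Int.eq_nat_or_neg k
    · exact ⟨n, by omega, by simpa using h⟩
    · exact ⟨n, by omega, by simpa using h⟩
  exact (isOfFinOrder_iff_pow_eq_one.mpr ⟨n, hn, hxn⟩).orderOf_pos.ne'

section FieldTheory

variable {K L : Type*} [Field K] [Field L] [Algebra K L]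

theorem IsIntegral.zpow {x : L} (hx : IsIntegral K x) (n : ℤ) : IsIntegral K (x ^ n) := by
  obtain ⟨n, rfl | rfl⟩ := Int.eq_nat_or_neg n
  · simpa using hx.pow n
  · simpa using (hx.pow n).inv

theorem IsIntegral.of_zpow {x : L} {n : ℤ} (hn : n ≠ 0) (hx : IsIntegral K (x ^ n)) :
    IsIntegral K x := by
  obtain ⟨n, rfl | rfl⟩ := Int.eq_nat_or_neg n
  · exact IsIntegral.of_pow (n := n) (by omega) (by simpa using hx)
  · exact IsIntegral.of_pow (n := n) (by omega) (by simpa using hx.inv)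

theorem IsConjRoot.zpow {x y : L} (hx : IsIntegral K x) (h : IsConjRoot K x y) (n : ℤ) :
    IsConjRoot K (x ^ n) (y ^ n) := by
  have : Fact (Irreducible (minpoly K x)) := ⟨minpoly.irreducible hx⟩
  have eq_root_zpow : ∀ z : L, aeval z (minpoly K x) = 0 →
      minpoly K (z ^ n) = minpoly K (AdjoinRoot.root (minpoly K x) ^ n) := fun z hz => by
    let φ := AdjoinRoot.liftAlgHom (minpoly K x) (Algebra.ofId K L) z hz
    have hφ : φ (AdjoinRoot.root _) = z := AdjoinRoot.liftAlgHom_root _ _ _ _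
    rw [← minpoly.algHom_eq φ φ.toRingHom.injective, map_zpow₀, hφ]
  exact (eq_root_zpow x (minpoly.aeval K x)).trans (eq_root_zpow y h.aeval_eq_zero).symm

theorem isConjRoot_iff_transcendental_or {x y : L} :
    IsConjRoot K x y ↔ (Transcendental K x ∧ Transcendental K y) ∨
      (IsAlgebraic K x ∧ IsAlgebraic K y ∧ minpoly K x = minpoly K y) := by
  constructor
  · intro h
    by_cases hx : IsAlgebraic K x
    · exact Or.inr ⟨hx, (h.isIntegral hx.isIntegral).isAlgebraic, h⟩
    · exact Or.inl ⟨hx, fun hy => hx (h.symm.isIntegral hy.isIntegral).isAlgebraic⟩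
  · rintro (⟨hx, hy⟩ | ⟨-, -, h⟩)
    · rw [isConjRoot_def, minpoly.eq_zero (mt IsIntegral.isAlgebraic hx),
        minpoly.eq_zero (mt IsIntegral.isAlgebraic hy)]
    · exact h

theorem orderOf_ne_zero_of_isConjRoot_zpow {x : L} (hx : IsIntegral K x) (hx0 : x ≠ 0) {N : ℤ}
    (hN : 1 < N.natAbs) (h : IsConjRoot K x (x ^ N)) : orderOf x ≠ 0 := by
  have hconj : ∀ j : ℕ, IsConjRoot K x (x ^ N ^ j) := by
    intro j
    induction j with
    | zero => simpa using IsConjRoot.refl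
    | succ j ih => simpa [pow_succ, zpow_mul] using h.trans (ih.zpow hx N)
  -- the powers `x ^ N ^ j` are roots of `minpoly K x`, so two of them coincide
  obtain ⟨i, j, hij, hpow⟩ := Set.Finite.exists_lt_map_eq_of_forall_mem
    (fun j => (isConjRoot_iff_mem_minpoly_rootSet hx).mp (hconj j))
    ((minpoly K x).rootSet_finite L)
  refine orderOf_ne_zero_of_zpow_eq_one (k := N ^ j - N ^ i) ?_ ?_
  · exact sub_ne_zero.mpr fun hc => hij.ne' (Int.pow_right_injective hN hc)
  · rw [zpow_sub₀ hx0, ← hpow, div_self (zpow_ne_zero _ hx0)]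

end FieldTheory

section CharZero

variable {K : Type*} [Field K] [CharZero K] {x y : K}

theorem IsConjRoot.orderOf_eq_of_pos (h : IsConjRoot ℚ x y) (hx : 0 < orderOf x) :
    orderOf y = orderOf x := by
  have hy : aeval y (cyclotomic (orderOf x) ℚ) = 0 := by
    rw [cyclotomic_eq_minpoly_rat (IsPrimitiveRoot.orderOf x) hx]
    exact h.aeval_eq_zero
  rw [aeval_def, ← eval_map, map_cyclotomic] at hy
  exact ((isRoot_cyclotomic_iff_charZero hx).mp hy).eq_orderOf.symm

theorem IsConjRoot.orderOf_eq (h : IsConjRoot ℚ x y) : orderOf x = orderOf y := by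
  rcases (orderOf x).eq_zero_or_pos with hx | hx
  · rcases (orderOf y).eq_zero_or_pos with hy | hy
    · rw [hx, hy]
    · exact h.symm.orderOf_eq_of_pos hy
  · exact (h.orderOf_eq_of_pos hx).symm

theorem isConjRoot_of_orderOf_eq (hx : 0 < orderOf x) (h : orderOf x = orderOf y) :
    IsConjRoot ℚ x y := by
  rw [isConjRoot_def, ← cyclotomic_eq_minpoly_rat (IsPrimitiveRoot.orderOf x) hx,
    ← cyclotomic_eq_minpoly_rat (IsPrimitiveRoot.orderOf y) (h ▸ hx), h]

theorem isConjRoot_or_isConjRoot_inv_of_isConjRoot_zpow (hx : IsIntegral ℚ x) (hx0 : x ≠ 0)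
    {k k' : ℤ} (hxy : IsConjRoot ℚ x (y ^ k)) (hyx : IsConjRoot ℚ y (x ^ k')) :
    IsConjRoot ℚ x y ∨ IsConjRoot ℚ x y⁻¹ := by
  have hord : orderOf x = orderOf y := Nat.dvd_antisymm
    (hxy.orderOf_eq ▸ orderOf_zpow_dvd y k) (hyx.orderOf_eq ▸ orderOf_zpow_dvd x k')
  rcases (orderOf x).eq_zero_or_pos with h0 | hpos
  · have hself : IsConjRoot ℚ x (x ^ (k' * k)) := by
      rw [zpow_mul]
      exact hxy.trans (hyx.symm.zpow (hx.zpow k') k).symm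
    have hkk' : (k' * k).natAbs = 1 := by
      by_contra hne
      rcases Nat.lt_or_gt_of_ne hne with hlt | hgt
      · have h1 : IsConjRoot ℚ (algebraMap ℚ K 1) x := by
          simpa [Int.natAbs_eq_zero.mp (Nat.lt_one_iff.mp hlt)] using hself.symm
        simp [h1.eq_algebraMap] at h0
      · exact orderOf_ne_zero_of_isConjRoot_zpow hx hx0 hgt hself h0
    rcases Int.natAbs_eq_natAbs_iff.mp (show k.natAbs = (1 : ℤ).natAbs from
      Nat.eq_one_of_mul_eq_one_left (Int.natAbs_mul k' k ▸ hkk')) with rfl | rfl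
    · exact Or.inl (by simpa using hxy)
    · exact Or.inr (by simpa using hxy)
  · exact Or.inl (isConjRoot_of_orderOf_eq hpos hord)

end CharZero

def HasNontrivialZPowRoot {R K : Type*} [CommRing R] [Field K] [Algebra R K] (p : R[X])
    (x : K) : Prop :=
  ∃ k : ℤ, x ^ k ≠ 1 ∧ aeval (x ^ k) p = 0

section HasNontrivialZPowRoot

variable {F K : Type*} [Field F] [Field K] [Algebra F K] {x y : K}

theorem hasNontrivialZPowRoot_zero_iff : HasNontrivialZPowRoot (0 : F[X]) x ↔ x ≠ 1 :=
  ⟨fun ⟨k, hk, _⟩ hx => hk (by simp [hx]), fun hx => ⟨1, by simpa using hx, by simp⟩⟩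

theorem hasNontrivialZPowRoot_minpoly_self (hx1 : x ≠ 1) :
    HasNontrivialZPowRoot (minpoly F x) x :=
  ⟨1, by simpa using hx1, by simp⟩

theorem HasNontrivialZPowRoot.exists_isConjRoot_zpow (hx : IsIntegral F x)
    (h : HasNontrivialZPowRoot (minpoly F x) y) : ∃ k : ℤ, k ≠ 0 ∧ IsConjRoot F x (y ^ k) := by
  obtain ⟨k, hk1, hk⟩ := h
  exact ⟨k, by rintro rfl; simp at hk1, isConjRoot_of_aeval_eq_zero hx hk⟩

theorem HasNontrivialZPowRoot.isIntegral (hx : IsIntegral F x)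
    (h : HasNontrivialZPowRoot (minpoly F x) y) : IsIntegral F y := by
  obtain ⟨k, hk, hxy⟩ := h.exists_isConjRoot_zpow hx
  exact (hxy.isIntegral hx).of_zpow hk

end HasNontrivialZPowRoot

theorem hasNontrivialZPowRoot_integerNormalization_iff {K : Type*} [Field K] [CharZero K]
    (p : ℚ[X]) (x : K) :
    HasNontrivialZPowRoot (IsLocalization.integerNormalization (nonZeroDivisors ℤ) p) x ↔
      HasNontrivialZPowRoot p x := by
  obtain ⟨c, hc0, hc⟩ := IsLocalization.integerNormalization_spec (nonZeroDivisors ℤ) p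
  have aeval_eq_zero_iff : ∀ z : K,
      aeval z (IsLocalization.integerNormalization (nonZeroDivisors ℤ) p) = 0 ↔ aeval z p = 0 := by
    intro z
    rw [← aeval_map_algebraMap ℚ, hc, map_zsmul, smul_eq_zero,
      or_iff_right (nonZeroDivisors.ne_zero hc0)]
  simp only [HasNontrivialZPowRoot, aeval_eq_zero_iff]

theorem isConjRoot_or_isConjRoot_inv_of_hasNontrivialZPowRoot_iff {K : Type*} [Field K]
    [CharZero K] {x y : K} (hx0 : x ≠ 0)
    (h : ∀ p : ℚ[X], HasNontrivialZPowRoot p x ↔ HasNontrivialZPowRoot p y) :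
    IsConjRoot ℚ x y ∨ IsConjRoot ℚ x y⁻¹ := by
  have hxy1 : x ≠ 1 ↔ y ≠ 1 := by simpa only [hasNontrivialZPowRoot_zero_iff] using h 0
  by_cases hx1 : x = 1
  · have hy1 : y = 1 := by simpa [hx1] using hxy1
    exact Or.inl (hx1 ▸ hy1 ▸ IsConjRoot.refl)
  have hy1 : y ≠ 1 := hxy1.mp hx1
  by_cases hx : IsIntegral ℚ x
  · have hxy := (h _).mp (hasNontrivialZPowRoot_minpoly_self hx1)
    have hy := hxy.isIntegral hx
    obtain ⟨k, -, hxy⟩ := hxy.exists_isConjRoot_zpow hx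
    obtain ⟨k', -, hyx⟩ :=
      ((h _).mpr (hasNontrivialZPowRoot_minpoly_self hy1)).exists_isConjRoot_zpow hy
    exact isConjRoot_or_isConjRoot_inv_of_isConjRoot_zpow hx hx0 hxy hyx
  · have hy : ¬ IsIntegral ℚ y := fun hy =>
      hx (((h _).mpr (hasNontrivialZPowRoot_minpoly_self hy1)).isIntegral hy)
    left
    rw [isConjRoot_def, minpoly.eq_zero hx, minpoly.eq_zero hy]

def polyWord {G : Type*} [Group G] (q : ℤ[X]) (x y : G) : G :=
  ((List.range (q.natDegree + 1)).map fun i => (x ^ i * y * (x ^ i)⁻¹) ^ q.coeff i).prod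

theorem map_polyWord {G H : Type*} [Group G] [Group H] (f : G →* H) (q : ℤ[X]) (x y : G) :
    f (polyWord q x y) = polyWord q (f x) (f y) := by
  simp [polyWord, map_list_prod, Function.comp_def]

def HasPolyWordSolution (q : ℤ[X]) (G : Type*) [Group G] : Prop :=
  ∃ x y : G, polyWord q x ⁅x, y⁆ = 1 ∧ ⁅x, ⁅x, y⁆⁆ ≠ 1

theorem hasPolyWordSolution_iff_exists_hom (q : ℤ[X]) (G : Type*) [Group G] :
    HasPolyWordSolution q G ↔ ∃ f : FreeGroup (Fin 2) →* G,
      f (polyWord q (.of 0) ⁅FreeGroup.of (0 : Fin 2), .of 1⁆) = 1 ∧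
        f ⁅FreeGroup.of (0 : Fin 2), ⁅FreeGroup.of (0 : Fin 2), .of 1⁆⁆ ≠ 1 := by
  simp only [map_polyWord, map_commutatorElement]
  exact ⟨fun ⟨x, y, hxy⟩ => ⟨FreeGroup.lift ![x, y], by simpa using hxy⟩, fun ⟨f, hf⟩ => ⟨_, _, hf⟩⟩

namespace SameUniversalTheory

variable {G H : Type*} [Group G] [Group H]

theorem of_mulEquiv (e : G ≃* H) : SameUniversalTheory G H := by
  intro n _ E I
  constructor
  · rintro ⟨f, hE, hI⟩
    exact ⟨e.toMonoidHom.comp f, by simp_all, by simp_all⟩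
  · rintro ⟨f, hE, hI⟩
    exact ⟨e.symm.toMonoidHom.comp f, by simp_all, by simp_all⟩

theorem hasPolyWordSolution_iff (h : SameUniversalTheory G H) (q : ℤ[X]) :
    HasPolyWordSolution q G ↔ HasPolyWordSolution q H := by
  rw [hasPolyWordSolution_iff_exists_hom, hasPolyWordSolution_iff_exists_hom]
  simpa using h 2 one_le_two {polyWord q (.of 0) ⁅FreeGroup.of (0 : Fin 2), .of 1⁆}
    {⁅FreeGroup.of (0 : Fin 2), ⁅FreeGroup.of (0 : Fin 2), .of 1⁆⁆}

end SameUniversalTheory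

namespace SDP

variable {R S : Type*} [CommRing R] [CommRing S] {u : Rˣ} {v : Sˣ}

def inl : Multiplicative R →* SDP R u where
  toFun r := (r.toAdd, 0)
  map_one' := rfl
  map_mul' r s := Prod.ext (show r.toAdd + s.toAdd = r.toAdd + ((u ^ (0 : ℤ) : Rˣ) : R) * s.toAdd
    by simp) rfl

theorem inl_injective : Function.Injective (inl : Multiplicative R →* SDP R u) :=
  fun _ _ h => congrArg Prod.fst h

theorem inl_eq_one_iff {s : R} : (inl (.ofAdd s) : SDP R u) = 1 ↔ s = 0 := by
  rw [map_eq_one_iff _ inl_injective, ofAdd_eq_one]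

theorem eq_inl_of_snd_eq_zero {g : SDP R u} (hg : g.2 = 0) : g = inl (.ofAdd g.1) :=
  Prod.ext rfl hg

theorem snd_pow (g : SDP R u) (n : ℕ) : (g ^ n).2 = n * g.2 := by
  induction n with
  | zero => simp [one_def]
  | succ n ih => rw [pow_succ, show (g ^ n * g).2 = (g ^ n).2 + g.2 from rfl, ih]; push_cast; ring

theorem snd_commutatorElement (g h : SDP R u) : ⁅g, h⁆.2 = 0 :=
  show g.2 + h.2 + -g.2 + -h.2 = 0 by ring

theorem conj_inl (g : SDP R u) (s : R) :
    g * inl (.ofAdd s) * g⁻¹ = inl (.ofAdd (((u ^ g.2 : Rˣ) : R) * s)) := by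
  refine Prod.ext ?_ (show g.2 + 0 + -g.2 = 0 by ring)
  show g.1 + ((u ^ g.2 : Rˣ) : R) * s +
      ((u ^ (g.2 + 0) : Rˣ) : R) * -(((u ^ (-g.2) : Rˣ) : R) * g.1) = ((u ^ g.2 : Rˣ) : R) * s
  rw [add_zero, mul_neg, ← mul_assoc, ← Units.val_mul, ← zpow_add, add_neg_cancel, zpow_zero,
    Units.val_one, one_mul]
  ring

theorem commutatorElement_inl (g : SDP R u) (s : R) :
    ⁅g, (inl (.ofAdd s) : SDP R u)⁆ = inl (.ofAdd ((((u ^ g.2 : Rˣ) : R) - 1) * s)) := by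
  rw [commutatorElement_def, conj_inl, ← map_inv, ← map_mul, ← ofAdd_neg, ← ofAdd_add, sub_mul,
    one_mul, sub_eq_add_neg]

theorem polyWord_inl (q : ℤ[X]) (g : SDP R u) (s : R) :
    polyWord q g (inl (.ofAdd s)) = inl (.ofAdd (s * aeval ((u ^ g.2 : Rˣ) : R) q)) := by
  have factor : ∀ i : ℕ, (g ^ i * inl (.ofAdd s) * (g ^ i)⁻¹) ^ q.coeff i =
      inl (.ofAdd (s * (q.coeff i • ((u ^ g.2 : Rˣ) : R) ^ i))) := by
    intro i
    rw [conj_inl, ← map_zpow, ← ofAdd_zsmul, snd_pow, mul_comm (i : ℤ), zpow_mul, zpow_natCast,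
      Units.val_pow_eq_pow_val, mul_smul_comm, mul_comm]
  rw [polyWord, List.map_congr_left fun i _ => factor i]
  generalize ((u ^ g.2 : Rˣ) : R) = v
  -- rewrite the sum over `Finset.range` as the image under `inl` of a product over `List.range`
  rw [aeval_eq_sum_range, Finset.mul_sum, ofAdd_sum, Finset.prod_eq_multiset_prod,
    Finset.range_val, Multiset.range, Multiset.map_coe, Multiset.prod_coe, ← List.prod_map_hom]
  rfl

theorem hasPolyWordSolution_iff [IsDomain R] (q : ℤ[X]) :
    HasPolyWordSolution q (SDP R u) ↔
      ∃ k : ℤ, ((u ^ k : Rˣ) : R) ≠ 1 ∧ aeval ((u ^ k : Rˣ) : R) q = 0 := by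
  constructor
  · rintro ⟨g, h, hw, hc⟩
    rw [eq_inl_of_snd_eq_zero (snd_commutatorElement g h), polyWord_inl, inl_eq_one_iff] at hw
    rw [eq_inl_of_snd_eq_zero (snd_commutatorElement g h), commutatorElement_inl, Ne,
      inl_eq_one_iff] at hc
    exact ⟨g.2, fun hv => hc (by rw [hv, sub_self, zero_mul]),
      (mul_eq_zero.mp hw).resolve_left (right_ne_zero_of_mul hc)⟩
  · rintro ⟨k, hk1, hk⟩
    obtain ⟨g, rfl⟩ : ∃ g : SDP R u, g.2 = k := ⟨((0 : R), k), rfl⟩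
    refine ⟨g, inl (.ofAdd 1), ?_, ?_⟩
    · rw [commutatorElement_inl, polyWord_inl, inl_eq_one_iff]
      exact mul_eq_zero_of_right _ hk
    · rw [commutatorElement_inl, commutatorElement_inl, Ne, inl_eq_one_iff]
      have hv : ((u ^ g.2 : Rˣ) : R) - 1 ≠ 0 := sub_ne_zero.mpr hk1
      simpa using mul_ne_zero hv hv

def congr (e : R ≃+* S) (h : e u = v) : SDP R u ≃* SDP S v where
  toFun g := (e g.1, g.2)
  invFun g := (e.symm g.1, g.2)
  left_inv g := Prod.ext (e.symm_apply_apply g.1) rfl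
  right_inv g := Prod.ext (e.apply_symm_apply g.1) rfl
  map_mul' g g' := by
    have hv : Units.map e.toMonoidHom u = v := Units.ext h
    refine Prod.ext ?_ rfl
    show e (g.1 + ((u ^ g.2 : Rˣ) : R) * g'.1) = e g.1 + ((v ^ g.2 : Sˣ) : S) * e g'.1
    rw [map_add, map_mul, ← hv, ← map_zpow, Units.coe_map]
    rfl

variable (R u) in
def equivInv : SDP R u ≃* SDP R u⁻¹ where
  toFun g := (g.1, -g.2)
  invFun g := (g.1, -g.2)
  left_inv g := Prod.ext rfl (neg_neg g.2)
  right_inv g := Prod.ext rfl (neg_neg g.2)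
  map_mul' g g' := by
    refine Prod.ext ?_ (neg_add g.2 g'.2)
    show g.1 + ((u ^ g.2 : Rˣ) : R) * g'.1 = g.1 + ((u⁻¹ ^ (-g.2) : Rˣ) : R) * g'.1
    rw [inv_zpow', neg_neg]

end SDP

theorem Subring.closure_pair_eq_range_eval₂ {S : Type*} [CommRing S] (x : Sˣ) :
    Subring.closure {(x : S), ↑x⁻¹} = (LaurentPolynomial.eval₂ (Int.castRingHom S) x).range := by
  refine le_antisymm (Subring.closure_le.mpr ?_) ?_
  · rintro _ (rfl | rfl)
    · exact ⟨LaurentPolynomial.T 1, by simp [LaurentPolynomial.eval₂_T]⟩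
    · exact ⟨LaurentPolynomial.T (-1), by simp [LaurentPolynomial.eval₂_T]⟩
  · rintro _ ⟨F, rfl⟩
    induction F using LaurentPolynomial.induction_on' with
    | add p q hp hq => rw [map_add]; exact add_mem hp hq
    | C_mul_T n a =>
      rw [LaurentPolynomial.eval₂_C_mul_T]
      refine mul_mem (intCast_mem _ a) ?_
      induction n using Int.induction_on with
      | zero => simp [one_mem]
      | succ n ih =>
        rw [zpow_add_one, Units.val_mul]
        exact mul_mem ih (Subring.subset_closure (by simp))
      | pred n ih =>
        rw [zpow_sub_one, Units.val_mul]
        exact mul_mem ih (Subring.subset_closure (by simp))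

theorem ker_eval₂_eq_of_isConjRoot {K : Type*} [Field K] [CharZero K] {x y : Kˣ}
    (h : IsConjRoot ℚ (x : K) y) :
    RingHom.ker (LaurentPolynomial.eval₂ (Int.castRingHom K) x) =
      RingHom.ker (LaurentPolynomial.eval₂ (Int.castRingHom K) y) := by
  have eval₂_eq_zero_iff : ∀ z : Kˣ, ∀ (f : ℤ[X]) (n : ℕ),
      LaurentPolynomial.eval₂ (Int.castRingHom K) z (f.toLaurent * LaurentPolynomial.T (-n)) = 0 ↔
        minpoly ℚ (z : K) ∣ f.map (algebraMap ℤ ℚ) := fun z f n => by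
    rw [map_mul, LaurentPolynomial.eval₂_toLaurent, LaurentPolynomial.eval₂_T, mul_eq_zero,
      or_iff_left (Units.ne_zero _), minpoly.dvd_iff, aeval_map_algebraMap ℚ, aeval_def,
      algebraMap_int_eq]
  ext F
  induction F using LaurentPolynomial.induction_on_mul_T with
  | mul_T f n => simp only [RingHom.mem_ker, eval₂_eq_zero_iff, isConjRoot_def.mp h]

noncomputable def RingHom.rangeEquivOfKerEq {A B C : Type*} [CommRing A] [Ring B] [Ring C]
    (f : A →+* B) (g : A →+* C) (h : RingHom.ker f = RingHom.ker g) : f.range ≃+* g.range :=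
  f.quotientKerEquivRange.symm.trans ((Ideal.quotEquivOfEq h).trans g.quotientKerEquivRange)

theorem RingHom.rangeEquivOfKerEq_apply {A B C : Type*} [CommRing A] [Ring B] [Ring C]
    (f : A →+* B) (g : A →+* C) (h : RingHom.ker f = RingHom.ker g) (a : A) :
    (rangeEquivOfKerEq f g h ⟨f a, f.mem_range_self a⟩ : C) = g a := by
  have hf : f.quotientKerEquivRange.symm ⟨f a, f.mem_range_self a⟩ = Ideal.Quotient.mk _ a := by
    rw [RingEquiv.symm_apply_eq]
    rfl
  rw [rangeEquivOfKerEq, RingEquiv.trans_apply, hf, RingEquiv.trans_apply, Ideal.quotEquivOfEq_mk]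
  rfl

theorem rring_eq_range_eval₂ (l : ℂ) (hl : l ≠ 0) :
    Rring l = (LaurentPolynomial.eval₂ (Int.castRingHom ℂ) (Units.mk0 l hl)).range := by
  rw [← Subring.closure_pair_eq_range_eval₂]
  simp [Rring]

theorem rring_inv (m : ℂ) : Rring m⁻¹ = Rring m := by
  rw [Rring, Rring, inv_inv, Set.pair_comm]

noncomputable def Rring.equivOfIsConjRoot {l m : ℂ} (hl : l ≠ 0) (hm : m ≠ 0)
    (h : IsConjRoot ℚ l m) : Rring l ≃+* Rring m :=
  (RingEquiv.subringCongr (rring_eq_range_eval₂ l hl)).trans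
    ((RingHom.rangeEquivOfKerEq _ _ (ker_eval₂_eq_of_isConjRoot h)).trans
      (RingEquiv.subringCongr (rring_eq_range_eval₂ m hm)).symm)

theorem Rring.equivOfIsConjRoot_runit {l m : ℂ} (hl : l ≠ 0) (hm : m ≠ 0)
    (h : IsConjRoot ℚ l m) : Rring.equivOfIsConjRoot hl hm h (Runit l hl) = Runit m hm := by
  have := RingHom.rangeEquivOfKerEq_apply _ _
    (ker_eval₂_eq_of_isConjRoot (x := Units.mk0 l hl) (y := Units.mk0 m hm) h)
    (LaurentPolynomial.T 1)
  simp only [LaurentPolynomial.eval₂_T, zpow_one, Units.val_mk0] at this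
  exact Subtype.ext this

theorem val_runit_zpow (m : ℂ) (hm : m ≠ 0) (k : ℤ) :
    (((Runit m hm ^ k : (Rring m)ˣ) : Rring m) : ℂ) = m ^ k := by
  have h : Units.map (Rring m).subtype.toMonoidHom (Runit m hm) = Units.mk0 m hm := Units.ext rfl
  calc (((Runit m hm ^ k : (Rring m)ˣ) : Rring m) : ℂ)
      = (Units.map (Rring m).subtype.toMonoidHom (Runit m hm ^ k) : ℂ) := rfl
    _ = m ^ k := by rw [map_zpow, h, Units.val_zpow_eq_zpow_val, Units.val_mk0]

namespace Gl

theorem hasPolyWordSolution_iff (m : ℂ) (hm : m ≠ 0) (q : ℤ[X]) :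
    HasPolyWordSolution q (Gl m hm) ↔ HasNontrivialZPowRoot q m := by
  refine (SDP.hasPolyWordSolution_iff q).trans (exists_congr fun k => ?_)
  set v := ((Runit m hm ^ k : (Rring m)ˣ) : Rring m)
  have hv : (v : ℂ) = m ^ k := val_runit_zpow m hm k
  have haeval : aeval (v : ℂ) q = (aeval v q : Rring m) := aeval_algebraMap_apply ℂ v q
  rw [← hv, haeval, Ne, Ne, OneMemClass.coe_eq_one, ZeroMemClass.coe_eq_zero]

noncomputable def mulEquivOfIsConjRoot {l m : ℂ} (hl : l ≠ 0) (hm : m ≠ 0)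
    (h : IsConjRoot ℚ l m) : Gl l hl ≃* Gl m hm :=
  SDP.congr (Rring.equivOfIsConjRoot hl hm h) (Rring.equivOfIsConjRoot_runit hl hm h)

noncomputable def mulEquivInv (m : ℂ) (hm : m ≠ 0) : Gl m hm ≃* Gl m⁻¹ (inv_ne_zero hm) :=
  (SDP.equivInv _ _).trans (SDP.congr (RingEquiv.subringCongr (rring_inv m).symm) rfl)

end Gl

/-- `G(λ)` and `G(μ)` have the same universal theory if and only if `λ` and `μ` are both
transcendental over `ℚ`, or both are algebraic over `ℚ` and `λ` has the same minimal
polynomial over `ℚ` as `μ` or as `μ⁻¹`. -/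
theorem sameUniversalTheory_Gl_iff
    (l m : ℂ) (hl : l ≠ 0) (hm : m ≠ 0) :
    SameUniversalTheory (Gl l hl) (Gl m hm) ↔
      (Transcendental ℚ l ∧ Transcendental ℚ m) ∨
      (IsAlgebraic ℚ l ∧ IsAlgebraic ℚ m ∧
        (minpoly ℚ l = minpoly ℚ m ∨ minpoly ℚ l = minpoly ℚ m⁻¹)) := by
  have transcendental_inv : Transcendental ℚ m⁻¹ ↔ Transcendental ℚ m := IsAlgebraic.inv_iff.not
  have conj_iff : IsConjRoot ℚ l m ∨ IsConjRoot ℚ l m⁻¹ ↔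
      (Transcendental ℚ l ∧ Transcendental ℚ m) ∨ (IsAlgebraic ℚ l ∧ IsAlgebraic ℚ m ∧
        (minpoly ℚ l = minpoly ℚ m ∨ minpoly ℚ l = minpoly ℚ m⁻¹)) := by
    simp only [isConjRoot_iff_transcendental_or, transcendental_inv, IsAlgebraic.inv_iff]
    tauto
  rw [← conj_iff]
  constructor
  · intro h
    refine isConjRoot_or_isConjRoot_inv_of_hasNontrivialZPowRoot_iff hl fun p => ?_
    rw [← hasNontrivialZPowRoot_integerNormalization_iff, ← Gl.hasPolyWordSolution_iff l hl,
      h.hasPolyWordSolution_iff, Gl.hasPolyWordSolution_iff,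
      hasNontrivialZPowRoot_integerNormalization_iff]
  · rintro (h | h)
    · exact .of_mulEquiv (Gl.mulEquivOfIsConjRoot hl hm h)
    · exact .of_mulEquiv
        ((Gl.mulEquivOfIsConjRoot hl (inv_ne_zero hm) h).trans (Gl.mulEquivInv m hm).symm)
end
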